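/- Let L be a linear endomorphism of a finite-dimensional real vector space, P an idempotent linear map, and Q = id − P. Then for all t ≥ 0, the derivative of t ↦ exp(t L) satisfies d/dt exp(t L) = exp(t L) ∘ P ∘ L + exp(t (Q∘L)) ∘ Q ∘ L + ∫₀ᵗ exp(s L) ∘ P ∘ L ∘ exp((t−s)(Q∘L)) ∘ Q ∘ L ds (the Mori–Zwanzig operator equation). -/

import Mathlib

/-!
Duhamel's formula: the derivative of `s ↦ exp (s • (A + B)) * exp ((t - s) • B)` is
`exp (s • (A + B)) * A * exp ((t - s) • B)`, so integrating over `[0, t]` gives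
`exp (t • (A + B)) - exp (t • B)`. For `A = P * L` and `B = Q * L` (so `A + B = L`), multiplying
this on the right by `Q * L` expresses the part `exp (t • L) * Q * L` of
`d/dt exp (t • L) = exp (t • L) * P * L + exp (t • L) * Q * L` as the fluctuation term plus the
memory integral.
-/

open NormedSpace intervalIntegral

section Duhamel

variable {𝔸 : Type*} [NormedRing 𝔸] [NormedAlgebra ℝ 𝔸] [CompleteSpace 𝔸]

theorem continuous_exp_smul_mul_mul_exp_sub_smul (A B : 𝔸) (t : ℝ) :
    Continuous fun s : ℝ => exp (s • (A + B)) * A * exp ((t - s) • B) :=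
  ((differentiable_exp_smul_const ℝ (A + B)).continuous.mul continuous_const).mul
    ((differentiable_exp_smul_const ℝ B).continuous.comp (continuous_const.sub continuous_id))

theorem hasDerivAt_exp_smul_mul_exp_sub_smul_mul (A B C : 𝔸) (t s : ℝ) :
    HasDerivAt (fun s : ℝ => exp (s • (A + B)) * exp ((t - s) • B) * C)
      (exp (s • (A + B)) * A * exp ((t - s) • B) * C) s := by
  have hB : HasDerivAt (fun s : ℝ => exp ((t - s) • B)) (-(B * exp ((t - s) • B))) s := by
    simpa [Function.comp_def] using
      (hasDerivAt_exp_smul_const' B (t - s)).scomp s ((hasDerivAt_id s).const_sub t)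
  refine (((hasDerivAt_exp_smul_const (A + B) s).mul hB).mul_const C).congr_deriv ?_
  simp only [mul_add, add_mul, mul_neg, mul_assoc, add_neg_cancel_right]

theorem exp_smul_add_sub_exp_smul_mul_eq_integral (A B C : 𝔸) (t : ℝ) :
    (exp (t • (A + B)) - exp (t • B)) * C =
      ∫ s in (0:ℝ)..t, exp (s • (A + B)) * A * exp ((t - s) • B) * C := by
  rw [integral_eq_sub_of_hasDerivAt
    (fun s _ => hasDerivAt_exp_smul_mul_exp_sub_smul_mul A B C t s)
    (((continuous_exp_smul_mul_mul_exp_sub_smul A B t).mul_const C).intervalIntegrable 0 t)]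
  simp [sub_mul]

end Duhamel

theorem mori_zwanzig_operator_equation_general
    {E : Type*} [NormedAddCommGroup E] [NormedSpace ℝ E] [FiniteDimensional ℝ E]
    (L P : E →L[ℝ] E) (Q : E →L[ℝ] E) (hQ : Q = 1 - P)
    (t : ℝ) :
    HasDerivAt (fun u : ℝ => exp (u • L))
      (exp (t • L) * P * L + exp (t • (Q * L)) * Q * L +
        ∫ s in (0:ℝ)..t, exp (s • L) * P * L * exp ((t - s) • (Q * L)) * Q * L) t := by
  have hL : P * L + Q * L = L := by rw [hQ]; noncomm_ring
  have duhamel := exp_smul_add_sub_exp_smul_mul_eq_integral (P * L) (Q * L) (Q * L) t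
  rw [hL] at duhamel
  refine (hasDerivAt_exp_smul_const L t).congr_deriv ?_
  simp only [mul_assoc] at duhamel ⊢
  rw [← duhamel, hQ]
  noncomm_ring

/-- Mori–Zwanzig operator equation: the derivative of `t ↦ exp(t L)` decomposes into a
Markovian term, a fluctuation term and a memory integral. -/
theorem mori_zwanzig_operator_equation
    {E : Type*} [NormedAddCommGroup E] [NormedSpace ℝ E] [FiniteDimensional ℝ E]
    (L P : E →L[ℝ] E) (hP : P * P = P) (Q : E →L[ℝ] E) (hQ : Q = 1 - P)
    (t : ℝ) (ht : 0 ≤ t) :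
    HasDerivAt (fun u : ℝ => exp (u • L))
      (exp (t • L) * P * L + exp (t • (Q * L)) * Q * L +
        ∫ s in (0:ℝ)..t, exp (s • L) * P * L * exp ((t - s) • (Q * L)) * Q * L) t :=
  mori_zwanzig_operator_equation_general L P Q hQ t
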